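/- arXiv:2605.16311 — 2 statements merged into one kernel-verified Lean document; each statement's English description precedes it below -/
import Mathlib

section
/- Let g ∈ ℝ be a real number with g ≠ 0, and let G̃ be a real random variable with E[G̃] = g and Var(G̃) ≤ σ²/n_b for constants σ ≥ 0 and n_b > 0. Then P(sign(G̃) ≠ sign(g)) ≤ σ / (√(n_b) · |g|). -/
/-!
If the sign of `G̃` differs from that of its mean `g`, then `G̃` has moved at least `|g|` away
from `g`, so Chebyshev bounds the failure probability by `Var G̃ / g² ≤ (σ / (√n_b |g|))²`.
A probability is at most `1`, and a number in `[0, 1]` bounded by `b²` is bounded by `b`.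
-/

open MeasureTheory ProbabilityTheory

theorem Real.abs_le_abs_sub_of_sign_ne {x g : ℝ} (h : Real.sign x ≠ Real.sign g) :
    |g| ≤ |x - g| := by
  contrapose! h
  obtain ⟨hlt, hgt⟩ := abs_sub_lt_iff.mp h
  rcases lt_trichotomy g 0 with hg | rfl | hg
  · rw [abs_of_neg hg] at hlt
    rw [Real.sign_of_neg hg, Real.sign_of_neg (by linarith)]
  · exact absurd h (by simp)
  · rw [abs_of_pos hg] at hgt
    rw [Real.sign_of_pos hg, Real.sign_of_pos (by linarith)]

theorem le_of_le_one_of_le_sq {p b : ℝ} (hb : 0 ≤ b) (h₁ : p ≤ 1) (h₂ : p ≤ b ^ 2) : p ≤ b := by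
  rcases le_or_gt 1 b with hb₁ | hb₁
  · exact h₁.trans hb₁
  · nlinarith

namespace ProbabilityTheory

variable {Ω : Type*} [MeasurableSpace Ω] {μ : Measure Ω}

theorem measureReal_sign_ne_sign_integral_le [IsFiniteMeasure μ] {X : Ω → ℝ} (hX : MemLp X 2 μ)
    (hmean : μ[X] ≠ 0) :
    μ.real {ω | Real.sign (X ω) ≠ Real.sign μ[X]} ≤ variance X μ / μ[X] ^ 2 := by
  have hsub : {ω | Real.sign (X ω) ≠ Real.sign μ[X]} ⊆ {ω | |μ[X]| ≤ |X ω - μ[X]|} :=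
    fun _ ↦ Real.abs_le_abs_sub_of_sign_ne
  have hcheb := meas_ge_le_variance_div_sq hX (abs_pos.mpr hmean)
  rw [sq_abs] at hcheb
  exact ENNReal.toReal_le_of_le_ofReal (div_nonneg (variance_nonneg _ _) (sq_nonneg _))
    ((measure_mono hsub).trans hcheb)

end ProbabilityTheory

theorem sign_failure_markov_bound_general
    {Ω : Type*} [MeasurableSpace Ω] (μ : Measure Ω) [IsProbabilityMeasure μ]
    (g σ nb : ℝ) (hg : g ≠ 0) (hσ : 0 ≤ σ) (hnb : 0 < nb)
    (G : Ω → ℝ) (hL2 : MemLp G 2 μ)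
    (hmean : ∫ ω, G ω ∂μ = g)
    (hvar : variance G μ ≤ σ ^ 2 / nb) :
    (μ {ω | Real.sign (G ω) ≠ Real.sign g}).toReal ≤ σ / (Real.sqrt nb * |g|) := by
  have hcheb := measureReal_sign_ne_sign_integral_le hL2 (hmean ▸ hg)
  rw [hmean] at hcheb
  have hratio : variance G μ / g ^ 2 ≤ (σ / (Real.sqrt nb * |g|)) ^ 2 := by
    rw [div_pow, mul_pow, Real.sq_sqrt hnb.le, sq_abs, ← div_div]
    gcongr
  exact le_of_le_one_of_le_sq (by positivity) measureReal_le_one (hcheb.trans hratio)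

/-- **Markov+Jensen sign-failure bound.** If `G̃` is a real random variable with mean `g ≠ 0`
and variance at most `σ²/n_b`, then the probability that `sign(G̃) ≠ sign(g)` is at most
`σ / (√n_b · |g|)`. -/
theorem sign_failure_markov_bound
    {Ω : Type*} [MeasurableSpace Ω] (μ : Measure Ω) [IsProbabilityMeasure μ]
    (g σ nb : ℝ) (hg : g ≠ 0) (hσ : 0 ≤ σ) (hnb : 0 < nb)
    (G : Ω → ℝ) (hmeas : Measurable G) (hL2 : MemLp G 2 μ)
    (hmean : ∫ ω, G ω ∂μ = g)
    (hvar : variance G μ ≤ σ ^ 2 / nb) :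
    (μ {ω | Real.sign (G ω) ≠ Real.sign g}).toReal ≤ σ / (Real.sqrt nb * |g|) :=
  sign_failure_markov_bound_general μ g σ nb hg hσ hnb G hL2 hmean hvar
end

section
/- Let M ≥ 1 workers each observe an i.i.d. copy of a sign bit that disagrees with the target sign s ∈ {−1,+1} with probability q, where q satisfies the Gauss-inequality bound: q ≤ 2/(9S²) if S > √(2/3) and q ≤ 1/2 − S/(2√3) otherwise, for a signal-to-noise ratio S > 0. Then the majority-vote failure probability satisfies q^MV := P(sign(Σ_{m=1}^{M} S⁽ᵐ⁾) ≠ s) ≤ (√6/2) · 1/(√M · S). -/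
/-!
Count the wrong votes: they form a binomial variable `N` with mean `M q` and variance
`M q (1 - q)`, and the vote can only fail when `N ≥ M / 2`, i.e. when `N` exceeds its mean by
`t = M (1/2 - q)`. Cantelli's one-sided inequality bounds this by `V / (V + t²) ≤ √V / (2t)`
(AM-GM), and both forms of the Gauss-inequality hypothesis give `snr² q (1 - q) ≤ 6 (1/2 - q)²`,
which turns `√V / (2t)` into `(√6 / 2) / (√M · snr)`.
-/

open MeasureTheory ProbabilityTheory

section Cantelli

variable {Ω : Type*} [MeasurableSpace Ω] {μ : Measure Ω} [IsProbabilityMeasure μ]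

theorem meas_ge_add_le_variance_div {X : Ω → ℝ} (hX : MemLp X 2 μ) {t : ℝ} (ht : 0 < t) :
    μ.real {ω | μ[X] + t ≤ X ω} ≤ Var[X; μ] / (Var[X; μ] + t ^ 2) := by
  set V := Var[X; μ]
  have hV : 0 ≤ V := variance_nonneg X μ
  -- Markov's inequality for `(X - μ[X] + a) ^ 2`, with the shift `a = V / t` that optimises it
  set a := V / t
  set Y : Ω → ℝ := fun ω => X ω + (a - μ[X])
  have hY : MemLp Y 2 μ := hX.add (memLp_const _)
  have hY_mean : μ[Y] = a := by
    simp [Y, integral_add (hX.integrable one_le_two) (integrable_const _)]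
  have hY_sq : ∫ ω, Y ω ^ 2 ∂μ = V + a ^ 2 := by
    have := variance_eq_sub hY
    rw [variance_add_const hX.aestronglyMeasurable, hY_mean] at this
    simp only [Pi.pow_apply] at this
    linarith
  have hsub : {ω | μ[X] + t ≤ X ω} ⊆ {ω | (t + a) ^ 2 ≤ Y ω ^ 2} := fun ω hω => by
    have : t + a ≤ Y ω := by simp only [Set.mem_ofPred_eq, Y] at hω ⊢; linarith
    exact pow_le_pow_left₀ (by positivity) this 2
  have markov := mul_meas_ge_le_integral_of_nonneg (Filter.Eventually.of_forall
    fun ω => sq_nonneg (Y ω)) hY.integrable_sq ((t + a) ^ 2)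
  have hE : (t + a) ^ 2 * μ.real {ω | μ[X] + t ≤ X ω} ≤ V + a ^ 2 :=
    calc _ ≤ (t + a) ^ 2 * μ.real {ω | (t + a) ^ 2 ≤ Y ω ^ 2} :=
          mul_le_mul_of_nonneg_left (measureReal_mono hsub) (sq_nonneg _)
      _ ≤ V + a ^ 2 := hY_sq ▸ markov
  calc μ.real {ω | μ[X] + t ≤ X ω} ≤ (V + a ^ 2) / (t + a) ^ 2 := by
        rw [le_div_iff₀ (by positivity)]; linarith
    _ = V / (V + t ^ 2) := by simp only [a]; field_simp; ring

end Cantelli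

section Bernoulli

variable {Ω ι : Type*} [MeasurableSpace Ω] {μ : Measure Ω} [IsFiniteMeasure μ]
  [Fintype ι] {A : ι → Set Ω} {p : ℝ}

lemma memLp_indicator_one {B : Set Ω} (hB : MeasurableSet B) (q : ENNReal) :
    MemLp (B.indicator (1 : Ω → ℝ)) q μ :=
  (memLp_const (1 : ℝ)).indicator hB

lemma variance_indicator_one [IsProbabilityMeasure μ] {B : Set Ω} (hB : MeasurableSet B) :
    Var[B.indicator 1; μ] = μ.real B * (1 - μ.real B) := by
  have hsq : (B.indicator 1 : Ω → ℝ) ^ 2 = B.indicator 1 := by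
    ext ω; by_cases h : ω ∈ B <;> simp [h]
  rw [variance_eq_sub (memLp_indicator_one hB 2), hsq, integral_indicator_one hB]
  ring

lemma integral_sum_indicator_one (hA : ∀ i, MeasurableSet (A i)) (hp : ∀ i, μ.real (A i) = p) :
    μ[∑ i, (A i).indicator 1] = Fintype.card ι * p := by
  simp only [Finset.sum_apply]
  rw [integral_finsetSum _ fun i _ => (memLp_indicator_one (hA i) 1).integrable le_rfl]
  simp [integral_indicator_one (hA _), hp]

lemma variance_sum_indicator_one [IsProbabilityMeasure μ] (hA : ∀ i, MeasurableSet (A i))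
    (hindep : iIndepFun (fun i => (A i).indicator (1 : Ω → ℝ)) μ)
    (hp : ∀ i, μ.real (A i) = p) :
    Var[∑ i, (A i).indicator 1; μ] = Fintype.card ι * (p * (1 - p)) := by
  rw [IndepFun.variance_sum (fun i _ => memLp_indicator_one (hA i) 2)
    fun i _ j _ hij => hindep.indepFun hij]
  simp [variance_indicator_one (hA _), hp]

end Bernoulli

lemma sign_sum_eq_of_two_mul_count_lt_card {ι : Type*} [Fintype ι] {x : ι → ℝ} {s : ℝ}
    (hs : s = 1 ∨ s = -1) (hx : ∀ i, x i = 1 ∨ x i = -1)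
    (h : 2 * ∑ i, (if x i = -s then (1 : ℝ) else 0) < Fintype.card ι) :
    Real.sign (∑ i, x i) = s := by
  have hx' : ∀ i, x i = s - 2 * s * (if x i = -s then 1 else 0) := fun i => by
    rcases hs with rfl | rfl <;> rcases hx i with hi | hi <;> simp [hi] <;> norm_num
  set W := ∑ i, (if x i = -s then (1 : ℝ) else 0)
  have hsum : ∑ i, x i = s * (Fintype.card ι - 2 * W) := by
    conv_lhs => rw [Finset.sum_congr rfl fun i _ => hx' i]
    rw [Finset.sum_sub_distrib, ← Finset.mul_sum]
    simp only [Finset.sum_const, Finset.card_univ, nsmul_eq_mul]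
    ring
  have hpos : 0 < (Fintype.card ι : ℝ) - 2 * W := by linarith
  rcases hs with rfl | rfl
  · rw [hsum, one_mul, Real.sign_of_pos hpos]
  · rw [hsum, Real.sign_of_neg (by linarith)]

lemma div_add_sq_le_sqrt_div {V t : ℝ} (hV : 0 ≤ V) (ht : 0 < t) :
    V / (V + t ^ 2) ≤ Real.sqrt V / (2 * t) := by
  have hsq := Real.sq_sqrt hV
  rw [div_le_div_iff₀ (by positivity) (by positivity)]
  nlinarith [mul_nonneg (Real.sqrt_nonneg V) (sq_nonneg (t - Real.sqrt V))]

lemma lt_half_and_sq_mul_le_of_le_two_div_nine_sq {q snr : ℝ} (hsnr : 2 / 3 < snr ^ 2)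
    (hq : q ≤ 2 / (9 * snr ^ 2)) :
    q < 1 / 2 ∧ snr ^ 2 * (q * (1 - q)) ≤ 6 * (1 / 2 - q) ^ 2 := by
  have h9 : q * (9 * snr ^ 2) ≤ 2 := (le_div_iff₀ (by positivity)).mp hq
  have hq3 : q ≤ 1 / 3 := by nlinarith
  refine ⟨by linarith, ?_⟩
  rcases le_or_gt 0 q with hq0 | hq0
  · nlinarith [sq_nonneg (q - 1 / 3),
      mul_nonneg (by linarith : (0 : ℝ) ≤ 2 - q * (9 * snr ^ 2))
        (by linarith : (0 : ℝ) ≤ 1 - q)]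
  · nlinarith [mul_neg_of_neg_of_pos hq0 (by linarith : (0 : ℝ) < 1 - q), sq_nonneg snr]

lemma lt_half_and_sq_mul_le_of_le_half_sub {q snr : ℝ} (hsnr : 0 < snr)
    (hq : q ≤ 1 / 2 - snr / (2 * Real.sqrt 3)) :
    q < 1 / 2 ∧ snr ^ 2 * (q * (1 - q)) ≤ 6 * (1 / 2 - q) ^ 2 := by
  have h3 : 0 < Real.sqrt 3 := by positivity
  have hsnr_le : snr ≤ 2 * Real.sqrt 3 * (1 / 2 - q) := by
    have := (div_le_iff₀ (by positivity : (0 : ℝ) < 2 * Real.sqrt 3)).mp (le_sub_comm.mp hq)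
    linarith
  refine ⟨by nlinarith, ?_⟩
  have hsnr_sq : snr ^ 2 ≤ 12 * (1 / 2 - q) ^ 2 := by
    have := pow_le_pow_left₀ hsnr.le hsnr_le 2
    rw [mul_pow, mul_pow, Real.sq_sqrt (by norm_num)] at this; linarith
  nlinarith [sq_nonneg (q - 1 / 2), sq_nonneg snr]

lemma sqrt_mul_div_le_of_sq_mul_le {M q snr : ℝ} (hM : 0 < M) (hsnr : 0 < snr) (hq0 : 0 ≤ q)
    (hq : q < 1 / 2)
    (h : snr ^ 2 * (q * (1 - q)) ≤ 6 * (1 / 2 - q) ^ 2) :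
    Real.sqrt (M * (q * (1 - q))) / (2 * (M * (1 / 2 - q)))
      ≤ Real.sqrt 6 / 2 * (1 / (Real.sqrt M * snr)) := by
  have ht : 0 < M * (1 / 2 - q) := by nlinarith
  rw [← pow_le_pow_iff_left₀ (by positivity) (by positivity) two_ne_zero]
  simp only [div_pow, mul_pow, one_pow]
  rw [Real.sq_sqrt (by nlinarith), Real.sq_sqrt (by norm_num), Real.sq_sqrt hM.le,
    div_le_iff₀ (by positivity)]
  field_simp
  nlinarith

theorem majority_vote_snr_bound_general
    {Ω : Type*} [MeasurableSpace Ω] (μ : Measure Ω) [IsProbabilityMeasure μ]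
    (M : ℕ) (hM : 1 ≤ M) (s q snr : ℝ) (hs : s = 1 ∨ s = -1)
    (hq0 : 0 ≤ q) (hsnr : 0 < snr)
    (hgauss_large : Real.sqrt (2 / 3) < snr → q ≤ 2 / (9 * snr ^ 2))
    (hgauss_small : ¬ Real.sqrt (2 / 3) < snr → q ≤ 1 / 2 - snr / (2 * Real.sqrt 3))
    (S : Fin M → Ω → ℝ)
    (hmeas : ∀ i, Measurable (S i))
    (hindep : iIndepFun S μ)
    (hval : ∀ i ω, S i ω = 1 ∨ S i ω = -1)
    (hwrong : ∀ i, μ {ω | S i ω = -s} = ENNReal.ofReal q) :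
    (μ {ω | Real.sign (∑ i, S i ω) ≠ s}).toReal
      ≤ (Real.sqrt 6 / 2) * (1 / (Real.sqrt M * snr)) := by
  obtain ⟨hq, hsnr_q⟩ : q < 1 / 2 ∧ snr ^ 2 * (q * (1 - q)) ≤ 6 * (1 / 2 - q) ^ 2 := by
    by_cases h : Real.sqrt (2 / 3) < snr
    · exact lt_half_and_sq_mul_le_of_le_two_div_nine_sq ((Real.sqrt_lt' hsnr).mp h)
        (hgauss_large h)
    · exact lt_half_and_sq_mul_le_of_le_half_sub hsnr (hgauss_small h)
  have hM0 : (0 : ℝ) < M := by exact_mod_cast hM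
  set A : Fin M → Set Ω := fun i => {ω | S i ω = -s}
  have hA : ∀ i, MeasurableSet (A i) := fun i => hmeas i (measurableSet_singleton _)
  have hpA : ∀ i, μ.real (A i) = q := fun i => by simp [measureReal_def, A, hwrong i, hq0]
  have hindepA : iIndepFun (fun i => (A i).indicator (1 : Ω → ℝ)) μ := by
    have hcomp : (fun i => (A i).indicator (1 : Ω → ℝ))
        = fun i => ({-s} : Set ℝ).indicator 1 ∘ S i := by
      ext i ω; simp only [A, Function.comp_apply, Set.indicator_apply, Set.mem_ofPred_eq,
        Set.mem_singleton_iff, Pi.one_apply]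
    rw [hcomp]
    exact hindep.comp _ fun _ => measurable_one.indicator (measurableSet_singleton _)
  set N := ∑ i, (A i).indicator (1 : Ω → ℝ)
  have hfail :
      {ω | Real.sign (∑ i, S i ω) ≠ s} ⊆ {ω | μ[N] + M * (1 / 2 - q) ≤ N ω} := by
    intro ω hω
    rw [Set.mem_ofPred_eq, integral_sum_indicator_one hA hpA, Fintype.card_fin]
    by_contra hlt
    refine hω (sign_sum_eq_of_two_mul_count_lt_card hs (hval · ω) ?_)
    simp only [N, Finset.sum_apply, Set.indicator_apply, A, Set.mem_ofPred_eq, Pi.one_apply] at hlt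
    rw [Fintype.card_fin]
    linarith
  have ht : (0 : ℝ) < M * (1 / 2 - q) := by nlinarith
  calc (μ {ω | Real.sign (∑ i, S i ω) ≠ s}).toReal
      ≤ μ.real {ω | μ[N] + M * (1 / 2 - q) ≤ N ω} := measureReal_mono hfail
    _ ≤ Var[N; μ] / (Var[N; μ] + (M * (1 / 2 - q)) ^ 2) :=
      meas_ge_add_le_variance_div (memLp_finsetSum' _ fun i _ => memLp_indicator_one (hA i) 2) ht
    _ ≤ Real.sqrt Var[N; μ] / (2 * (M * (1 / 2 - q))) :=
      div_add_sq_le_sqrt_div (variance_nonneg _ _) ht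
    _ ≤ Real.sqrt 6 / 2 * (1 / (Real.sqrt M * snr)) := by
      rw [variance_sum_indicator_one hA hindepA hpA, Fintype.card_fin]
      exact sqrt_mul_div_le_of_sq_mul_le hM0 hsnr hq0 hq hsnr_q

/-- **Majority vote under the Gauss-inequality bound.** Let `M ≥ 1` workers each observe an
i.i.d. `{−1,+1}`-valued sign bit that disagrees with the target sign `s ∈ {−1,+1}` with
probability `q`, where `q ≤ 2/(9S²)` if `S > √(2/3)` and `q ≤ 1/2 − S/(2√3)` otherwise, for a
signal-to-noise ratio `S > 0`. Then the majority-vote failure probability satisfies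
`P(sign(Σₘ S⁽ᵐ⁾) ≠ s) ≤ (√6/2) · 1/(√M · S)`. -/
theorem majority_vote_snr_bound
    {Ω : Type*} [MeasurableSpace Ω] (μ : Measure Ω) [IsProbabilityMeasure μ]
    (M : ℕ) (hM : 1 ≤ M) (s q snr : ℝ) (hs : s = 1 ∨ s = -1)
    (hq0 : 0 ≤ q) (hsnr : 0 < snr)
    (hgauss_large : Real.sqrt (2 / 3) < snr → q ≤ 2 / (9 * snr ^ 2))
    (hgauss_small : ¬ Real.sqrt (2 / 3) < snr → q ≤ 1 / 2 - snr / (2 * Real.sqrt 3))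
    (S : Fin M → Ω → ℝ)
    (hmeas : ∀ i, Measurable (S i))
    (hindep : iIndepFun S μ)
    (hval : ∀ i ω, S i ω = 1 ∨ S i ω = -1)
    (hcorrect : ∀ i, μ {ω | S i ω = s} = ENNReal.ofReal (1 - q))
    (hwrong : ∀ i, μ {ω | S i ω = -s} = ENNReal.ofReal q) :
    (μ {ω | Real.sign (∑ i, S i ω) ≠ s}).toReal
      ≤ (Real.sqrt 6 / 2) * (1 / (Real.sqrt M * snr)) :=
  majority_vote_snr_bound_general μ M hM s q snr hs hq0 hsnr hgauss_large hgauss_small S hmeas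
    hindep hval hwrong
end
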